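/- Let A, B ∈ ℝ^{n×n} be symmetric, and let S₁, S₂ ⊂ ℝ be two sets with dist(S₁, S₂) ≥ δ > 0. Let E be the orthogonal projection onto the span of eigenvectors of A with eigenvalues in S₁, and F the orthogonal projection onto the span of eigenvectors of B with eigenvalues in S₂. Then ‖EF‖_F ≤ ‖A − B‖_F / δ. -/

import Mathlib

open Matrix
open scoped Classical

noncomputable def frobNorm {n : ℕ} (A : Matrix (Fin n) (Fin n) ℝ) : ℝ :=
  Real.sqrt (Matrix.trace (Aᵀ * A))

/-!
Write `A = U Λ Uᵀ` and `B = V M Vᵀ` with `U`, `V` orthogonal and `Λ`, `M` diagonal, and put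
`G = Uᵀ V`. Then `E F = U (P G Q) Vᵀ` and `A - B = U (Λ G - G M) Vᵀ`, where `P`, `Q` are the
diagonal `0/1` matrices selecting the eigenvalues in `S₁`, `S₂`. The Frobenius norm ignores
the orthogonal factors, and entrywise `(Λ G - G M)ᵢⱼ = (λᵢ - μⱼ) Gᵢⱼ`, while `(P G Q)ᵢⱼ` is
`Gᵢⱼ` when `λᵢ ∈ S₁`, `μⱼ ∈ S₂` (so `|λᵢ - μⱼ| ≥ δ`) and `0` otherwise.
-/

open scoped Matrix.Norms.Frobenius

theorem Unitary.conj_sub_conj {R : Type*} [Ring R] [StarMul R] (U V : unitary R) (a b : R) :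
    (U : R) * a * star (U : R) - V * b * star (V : R) =
      U * (a * (star (U : R) * V) - star (U : R) * V * b) * star (V : R) := by
  have hU : (U : R) * star (U : R) = 1 := Unitary.mul_star_self_of_mem U.2
  have hV : (V : R) * star (V : R) = 1 := Unitary.mul_star_self_of_mem V.2
  simp only [mul_sub, sub_mul, mul_assoc, hV, mul_one]
  simp only [← mul_assoc, hU, one_mul]

theorem Matrix.IsHermitian.eq_conj_diagonal_eigenvalues {n : Type*} [Fintype n] [DecidableEq n]
    {A : Matrix n n ℝ} (hA : A.IsHermitian) :
    A = hA.eigenvectorUnitary * diagonal hA.eigenvalues *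
      star (hA.eigenvectorUnitary : Matrix n n ℝ) := by
  conv_lhs => rw [hA.spectral_theorem, Unitary.conjStarAlgAut_apply]
  simp [RCLike.ofReal_real_eq_id]

namespace Matrix

variable {m n : Type*} [Fintype m] [Fintype n]

theorem frobenius_norm_le_of_forall_norm_le {α β : Type*} [SeminormedAddCommGroup α]
    [SeminormedAddCommGroup β] {X : Matrix m n α} {Y : Matrix m n β}
    (h : ∀ i j, ‖X i j‖ ≤ ‖Y i j‖) : ‖X‖ ≤ ‖Y‖ := by
  rw [frobenius_norm_def, frobenius_norm_def]
  gcongr with i _ j _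
  exact h i j

theorem frobenius_norm_sq_eq_trace (A : Matrix m n ℝ) : ‖A‖ ^ 2 = trace (Aᵀ * A) := by
  rw [frobenius_norm_def, ← Real.rpow_natCast, ← Real.rpow_mul (by positivity), Finset.sum_comm]
  norm_num [trace, mul_apply, sq]

theorem frobenius_norm_orthogonal_mul [DecidableEq m] {U : Matrix m m ℝ}
    (hU : U ∈ orthogonalGroup m ℝ) (X : Matrix m n ℝ) : ‖U * X‖ = ‖X‖ := by
  refine (sq_eq_sq₀ (norm_nonneg _) (norm_nonneg _)).1 ?_
  rw [frobenius_norm_sq_eq_trace, frobenius_norm_sq_eq_trace, transpose_mul, Matrix.mul_assoc,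
    ← Matrix.mul_assoc Uᵀ, (mem_orthogonalGroup_iff' m ℝ).1 hU, Matrix.one_mul]

theorem frobenius_norm_mul_orthogonal [DecidableEq n] (X : Matrix m n ℝ) {V : Matrix n n ℝ}
    (hV : V ∈ orthogonalGroup n ℝ) : ‖X * V‖ = ‖X‖ := by
  have hVt : Vᵀ ∈ orthogonalGroup n ℝ := by
    rwa [mem_orthogonalGroup_iff', transpose_transpose, ← mem_orthogonalGroup_iff]
  rw [← frobenius_norm_transpose, transpose_mul, frobenius_norm_orthogonal_mul hVt,
    frobenius_norm_transpose]

theorem mul_frobenius_norm_le_of_separated [DecidableEq m] [DecidableEq n]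
    {a : m → ℝ} {b : n → ℝ} {S₁ S₂ : Set ℝ} {δ : ℝ} (hδ : 0 ≤ δ)
    (hsep : ∀ x ∈ S₁, ∀ y ∈ S₂, δ ≤ |x - y|) (G : Matrix m n ℝ) :
    δ * ‖diagonal (fun i => if a i ∈ S₁ then (1 : ℝ) else 0) * G *
        diagonal (fun j => if b j ∈ S₂ then (1 : ℝ) else 0)‖ ≤
      ‖diagonal a * G - G * diagonal b‖ := by
  rw [← abs_of_nonneg hδ, ← Real.norm_eq_abs, ← norm_smul]
  refine frobenius_norm_le_of_forall_norm_le fun i j => ?_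
  simp only [smul_apply, sub_apply, mul_diagonal, diagonal_mul, smul_eq_mul, Real.norm_eq_abs]
  split_ifs with ha hb
  · rw [mul_one, one_mul, abs_mul, abs_of_nonneg hδ, mul_comm (G i j), ← sub_mul, abs_mul]
    exact mul_le_mul_of_nonneg_right (hsep _ ha _ hb) (abs_nonneg _)
  all_goals simp

end Matrix

theorem frobNorm_eq_frobenius_norm {n : ℕ} (A : Matrix (Fin n) (Fin n) ℝ) :
    frobNorm A = ‖A‖ := by
  rw [frobNorm, ← frobenius_norm_sq_eq_trace, Real.sqrt_sq (norm_nonneg _)]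

/-- Bhatia VII.3.1 for symmetric matrices: if `E`, `F` are the spectral projections of `A`
and `B` onto eigenvalues lying in sets `S₁`, `S₂` separated by `δ > 0`, then
`‖EF‖_F ≤ ‖A − B‖_F/δ`. -/
theorem spectral_proj_product_bound (n : ℕ)
    (A B : Matrix (Fin n) (Fin n) ℝ) (hA : A.IsHermitian) (hB : B.IsHermitian)
    (S₁ S₂ : Set ℝ) (δ : ℝ) (hδ : 0 < δ)
    (hsep : ∀ x ∈ S₁, ∀ y ∈ S₂, δ ≤ |x - y|)
    (E F : Matrix (Fin n) (Fin n) ℝ)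
    (hE : E = (hA.eigenvectorUnitary : Matrix (Fin n) (Fin n) ℝ) *
      Matrix.diagonal (fun i => if hA.eigenvalues i ∈ S₁ then (1 : ℝ) else 0) *
      (hA.eigenvectorUnitary : Matrix (Fin n) (Fin n) ℝ)ᴴ)
    (hF : F = (hB.eigenvectorUnitary : Matrix (Fin n) (Fin n) ℝ) *
      Matrix.diagonal (fun i => if hB.eigenvalues i ∈ S₂ then (1 : ℝ) else 0) *
      (hB.eigenvectorUnitary : Matrix (Fin n) (Fin n) ℝ)ᴴ) :
    frobNorm (E * F) ≤ frobNorm (A - B) / δ := by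
  set U := hA.eigenvectorUnitary
  set V := hB.eigenvectorUnitary
  set G := star (U : Matrix (Fin n) (Fin n) ℝ) * V
  have hEF : E * F = U * (diagonal (fun i => if hA.eigenvalues i ∈ S₁ then (1 : ℝ) else 0) * G *
      diagonal (fun j => if hB.eigenvalues j ∈ S₂ then (1 : ℝ) else 0)) *
      star (V : Matrix (Fin n) (Fin n) ℝ) := by
    simp only [hE, hF, G, ← star_eq_conjTranspose, Matrix.mul_assoc]
  have hAB : A - B = U * (diagonal hA.eigenvalues * G - G * diagonal hB.eigenvalues) *
      star (V : Matrix (Fin n) (Fin n) ℝ) := by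
    conv_lhs => rw [hA.eq_conj_diagonal_eigenvalues, hB.eq_conj_diagonal_eigenvalues]
    exact Unitary.conj_sub_conj U V _ _
  have hVt : star (V : Matrix (Fin n) (Fin n) ℝ) ∈ orthogonalGroup (Fin n) ℝ :=
    Unitary.star_mem V.2
  rw [le_div_iff₀ hδ, mul_comm, frobNorm_eq_frobenius_norm, frobNorm_eq_frobenius_norm, hEF, hAB,
    frobenius_norm_mul_orthogonal _ hVt, frobenius_norm_orthogonal_mul U.2,
    frobenius_norm_mul_orthogonal _ hVt, frobenius_norm_orthogonal_mul U.2]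
  exact mul_frobenius_norm_le_of_separated hδ.le hsep G
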